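/- Let S and T be inverse semigroups. A function θ : S → T is a premorphism if and only if both of the following hold: (1) θ is ordered, i.e. a ≤ b implies θ(a) ≤ θ(b); and (2) whenever a, b ∈ S satisfy a⁻¹*a = b*b⁻¹, one has θ(a*b) = θ(a)*θ(b). -/
import Mathlib


/-- An inverse semigroup: a semigroup in which every element `a` has a
(unique) inverse `a⁻¹` with `a * a⁻¹ * a = a` and `a⁻¹ * a * a⁻¹ = a⁻¹`. -/
class InverseSemigroup (S : Type*) extends Semigroup S, Inv S where
  mul_inv_mul : ∀ a : S, a * a⁻¹ * a = a
  inv_mul_inv : ∀ a : S, a⁻¹ * a * a⁻¹ = a⁻¹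
  inv_unique : ∀ a b : S, a * b * a = a → b * a * b = b → b = a⁻¹

/-- The natural partial order on an inverse semigroup:
`a ≤ b` iff `a = e * b` for some idempotent `e`. -/
def npo {S : Type*} [InverseSemigroup S] (a b : S) : Prop :=
  ∃ e : S, e * e = e ∧ a = e * b

/-- A premorphism of inverse semigroups: `θ (a * b) ≤ θ a * θ b` in the
natural partial order of the codomain. -/
def IsPremorphism {S T : Type*} [InverseSemigroup S] [InverseSemigroup T]
    (θ : S → T) : Prop :=
  ∀ a b : S, npo (θ (a * b)) (θ a * θ b)

section Helpers

variable {S : Type*} [InverseSemigroup S]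

private lemma mi (a : S) : a * a⁻¹ * a = a := InverseSemigroup.mul_inv_mul a
private lemma im (a : S) : a⁻¹ * a * a⁻¹ = a⁻¹ := InverseSemigroup.inv_mul_inv a
private lemma iu (a b : S) (h1 : a * b * a = a) (h2 : b * a * b = b) : b = a⁻¹ :=
  InverseSemigroup.inv_unique a b h1 h2

private lemma is_inv_inv (a : S) : a⁻¹⁻¹ = a := (iu a⁻¹ a (im a) (mi a)).symm

private lemma idem_inv {e : S} (he : e * e = e) : e⁻¹ = e :=
  (iu e e (by rw [he, he]) (by rw [he, he])).symm

private lemma mul_inv_idem (a : S) : (a * a⁻¹) * (a * a⁻¹) = a * a⁻¹ := by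
  rw [← mul_assoc, mi]

private lemma inv_mul_idem (a : S) : (a⁻¹ * a) * (a⁻¹ * a) = a⁻¹ * a := by
  rw [← mul_assoc, im]

private lemma r1 {p : S} (h : p * p = p) (x : S) : p * (p * x) = p * x := by
  rw [← mul_assoc, h]

private lemma idem_mul_idem {e f : S} (he : e * e = e) (hf : f * f = f) :
    (e * f) * (e * f) = e * f := by
  have h3 : (e*f)⁻¹ * (e * (f * ((e*f)⁻¹ * e))) = (e*f)⁻¹ * e := by
    have h := congrArg (· * e) (im (e*f))
    simpa only [mul_assoc] using h
  have key : f * (e*f)⁻¹ * e = (e*f)⁻¹ := by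
    apply iu (e*f)
    · have h0 := mi (e*f)
      simp only [mul_assoc] at h0 ⊢
      rw [r1 hf, r1 he]; exact h0
    · simp only [mul_assoc]
      rw [r1 he, r1 hf, h3]
  have idem_a : (e*f)⁻¹ * (e*f)⁻¹ = (e*f)⁻¹ := by
    conv_lhs => rw [← key]
    simp only [mul_assoc]
    rw [h3]
    simpa only [mul_assoc] using key
  have h4 : e * f = (e*f)⁻¹ := (is_inv_inv (e*f)).symm.trans (idem_inv idem_a)
  have h5 := idem_a
  rw [← h4] at h5
  exact h5

private lemma idem_comm {e f : S} (he : e * e = e) (hf : f * f = f) : e * f = f * e := by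
  have hef := idem_mul_idem he hf
  have hfe := idem_mul_idem hf he
  have key : f * e = (e*f)⁻¹ := by
    apply iu (e*f)
    · simp only [mul_assoc] at hef ⊢
      rw [r1 hf, r1 he]; exact hef
    · simp only [mul_assoc] at hfe ⊢
      rw [r1 he, r1 hf]; exact hfe
  exact (key.trans (idem_inv hef)).symm

private lemma is_mul_inv_rev (a b : S) : (a * b)⁻¹ = b⁻¹ * a⁻¹ := by
  refine (iu (a*b) (b⁻¹ * a⁻¹) ?_ ?_).symm
  · calc (a*b)*(b⁻¹*a⁻¹)*(a*b) = a*((b*b⁻¹)*(a⁻¹*a))*b := by simp only [mul_assoc]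
      _ = a*((a⁻¹*a)*(b*b⁻¹))*b := by rw [idem_comm (mul_inv_idem b) (inv_mul_idem a)]
      _ = (a*a⁻¹*a)*(b*b⁻¹*b) := by simp only [mul_assoc]
      _ = a*b := by rw [mi, mi]
  · calc (b⁻¹*a⁻¹)*(a*b)*(b⁻¹*a⁻¹) = b⁻¹*((a⁻¹*a)*(b*b⁻¹))*a⁻¹ := by simp only [mul_assoc]
      _ = b⁻¹*((b*b⁻¹)*(a⁻¹*a))*a⁻¹ := by rw [idem_comm (inv_mul_idem a) (mul_inv_idem b)]
      _ = (b⁻¹*b*b⁻¹)*(a⁻¹*a*a⁻¹) := by simp only [mul_assoc]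
      _ = b⁻¹*a⁻¹ := by rw [im, im]

private lemma npo_of_left {a b : S} (h : a = a * a⁻¹ * b) : npo a b :=
  ⟨a * a⁻¹, mul_inv_idem a, h⟩

private lemma npo_left {a b : S} (h : npo a b) : a = a * a⁻¹ * b := by
  obtain ⟨e, he, rfl⟩ := h
  rw [is_mul_inv_rev, idem_inv he]
  refine Eq.symm ?_
  calc (e*b)*(b⁻¹*e)*b = e*((b*b⁻¹)*e)*b := by simp only [mul_assoc]
    _ = e*(e*(b*b⁻¹))*b := by rw [idem_comm (mul_inv_idem b) he]
    _ = (e*e)*(b*b⁻¹*b) := by simp only [mul_assoc]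
    _ = e*b := by rw [he, mi]

private lemma npo_of_right {a b f : S} (hf : f * f = f) (h : a = b * f) : npo a b := by
  subst h
  refine ⟨(b*f)*(b*f)⁻¹, mul_inv_idem _, Eq.symm ?_⟩
  rw [is_mul_inv_rev, idem_inv hf]
  calc (b*f)*(f*b⁻¹)*b = b*((f*f)*(b⁻¹*b))  := by simp only [mul_assoc]
    _ = b*(f*(b⁻¹*b)) := by rw [hf]
    _ = b*((b⁻¹*b)*f) := by rw [idem_comm hf (inv_mul_idem b)]
    _ = (b*b⁻¹*b)*f := by simp only [mul_assoc]
    _ = b*f := by rw [mi]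

private lemma npo_right {a b : S} (h : npo a b) : a = b * (a⁻¹ * a) := by
  obtain ⟨e, he, rfl⟩ := h
  rw [is_mul_inv_rev, idem_inv he]
  refine Eq.symm ?_
  calc b*((b⁻¹*e)*(e*b)) = (b*b⁻¹)*((e*e)*b) := by simp only [mul_assoc]
    _ = ((b*b⁻¹)*e)*b := by rw [he]; simp only [mul_assoc]
    _ = (e*(b*b⁻¹))*b := by rw [idem_comm (mul_inv_idem b) he]
    _ = e*(b*b⁻¹*b) := by simp only [mul_assoc]
    _ = e*b := by rw [mi]

private lemma npo_refl (a : S) : npo a a := npo_of_left (mi a).symm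

private lemma npo_trans {a b c : S} (h1 : npo a b) (h2 : npo b c) : npo a c := by
  obtain ⟨f, hf, rfl⟩ := h2
  obtain ⟨e, he, rfl⟩ := h1
  exact ⟨e * f, idem_mul_idem he hf, (mul_assoc e f c).symm⟩

private lemma npo_mul_right {a b : S} (h : npo a b) (c : S) : npo (a * c) (b * c) := by
  obtain ⟨e, he, rfl⟩ := h
  exact ⟨e, he, mul_assoc e b c⟩

private lemma npo_mul_left {a b : S} (h : npo a b) (c : S) : npo (c * a) (c * b) := by
  have hr := npo_right h
  refine npo_of_right (inv_mul_idem a) ?_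
  rw [mul_assoc, ← hr]

private lemma npo_antisymm {a b : S} (h1 : npo a b) (h2 : npo b a) : a = b := by
  have ha := npo_left h1
  have hb := npo_left h2
  calc a = a*a⁻¹*(b*b⁻¹*a) := by rw [← hb]; exact ha
    _ = ((a*a⁻¹)*(b*b⁻¹))*a := by simp only [mul_assoc]
    _ = ((b*b⁻¹)*(a*a⁻¹))*a := by rw [idem_comm (mul_inv_idem a) (mul_inv_idem b)]
    _ = (b*b⁻¹)*(a*a⁻¹*a) := by simp only [mul_assoc]
    _ = b*b⁻¹*a := by rw [mi]
    _ = b := hb.symm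

variable {T : Type*} [InverseSemigroup T] {θ : S → T}

private lemma theta_idem (hθ : IsPremorphism θ) {e : S} (he : e * e = e) :
    θ e * θ e = θ e := by
  have h := hθ e e
  rw [he] at h
  have h2 := npo_left h
  rw [← mul_assoc, mi] at h2
  exact h2.symm

private lemma theta_ordered (hθ : IsPremorphism θ) {a b : S} (h : npo a b) :
    npo (θ a) (θ b) := by
  obtain ⟨e, he, rfl⟩ := h
  exact npo_trans (hθ e b) ⟨θ e, theta_idem hθ he, rfl⟩

private lemma theta_inv (hθ : IsPremorphism θ) (s : S) : θ s⁻¹ = (θ s)⁻¹ := by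
  have key : ∀ t : S, θ t = θ t * θ t⁻¹ * θ t := by
    intro t
    have h1 : npo (θ t) (θ t * θ (t⁻¹ * t)) := by
      have h := hθ t (t⁻¹ * t)
      rw [show t * (t⁻¹ * t) = t from by rw [← mul_assoc, mi]] at h
      exact h
    have h2 : npo (θ t * θ (t⁻¹ * t)) (θ t * (θ t⁻¹ * θ t)) :=
      npo_mul_left (hθ t⁻¹ t) _
    have h3 := npo_left (npo_trans h1 h2)
    calc θ t = θ t * (θ t)⁻¹ * (θ t * (θ t⁻¹ * θ t)) := h3
      _ = (θ t * (θ t)⁻¹ * θ t) * (θ t⁻¹ * θ t) := by simp only [mul_assoc]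
      _ = θ t * θ t⁻¹ * θ t := by rw [mi]; simp only [mul_assoc]
  have h1 := key s
  have h2 := key s⁻¹
  rw [is_inv_inv] at h2
  exact iu (θ s) (θ s⁻¹) h1.symm h2.symm

private lemma theta_mul (hθ : IsPremorphism θ) {a b : S} (hab : a⁻¹ * a = b * b⁻¹) :
    θ (a * b) = θ a * θ b := by
  have hu : npo (θ (a * b)) (θ a * θ b) := hθ a b
  have ha : a = (a * b) * b⁻¹ := by
    calc a = a * a⁻¹ * a := (mi a).symm
      _ = a * (a⁻¹ * a) := by rw [mul_assoc]
      _ = a * (b * b⁻¹) := by rw [hab]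
      _ = (a * b) * b⁻¹ := by rw [mul_assoc]
  have hb : b = a⁻¹ * (a * b) := by
    calc b = b * b⁻¹ * b := (mi b).symm
      _ = (a⁻¹ * a) * b := by rw [hab]
      _ = a⁻¹ * (a * b) := mul_assoc _ _ _
  have h1 : npo (θ a) (θ (a * b) * (θ b)⁻¹) := by
    have h := hθ (a * b) b⁻¹
    rw [← ha, theta_inv hθ] at h
    exact h
  have h2 : npo (θ b) ((θ a)⁻¹ * θ (a * b)) := by
    have h := hθ a⁻¹ (a * b)
    rw [← hb, theta_inv hθ] at h
    exact h
  have h3 : npo (θ a * θ b) ((θ (a*b) * (θ b)⁻¹) * ((θ a)⁻¹ * θ (a*b))) :=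
    npo_trans (npo_mul_right h1 _) (npo_mul_left h2 _)
  have h4 : (θ (a*b) * (θ b)⁻¹) * ((θ a)⁻¹ * θ (a*b))
      = θ (a*b) * (θ a * θ b)⁻¹ * θ (a*b) := by
    rw [is_mul_inv_rev]; simp only [mul_assoc]
  rw [h4] at h3
  have h5 : npo (θ (a*b) * (θ a * θ b)⁻¹ * θ (a*b))
      (θ a * θ b * (θ a * θ b)⁻¹ * θ (a*b)) :=
    npo_mul_right (npo_mul_right hu _) _
  have h6 : npo (θ a * θ b * (θ a * θ b)⁻¹ * θ (a*b)) (θ (a*b)) :=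
    ⟨(θ a * θ b) * (θ a * θ b)⁻¹, mul_inv_idem _, rfl⟩
  exact npo_antisymm hu (npo_trans h3 (npo_trans h5 h6))

end Helpers

theorem premorphism_iff {S T : Type*} [InverseSemigroup S] [InverseSemigroup T]
    (θ : S → T) :
    IsPremorphism θ ↔
      ((∀ a b : S, npo a b → npo (θ a) (θ b)) ∧
        ∀ a b : S, a⁻¹ * a = b * b⁻¹ → θ (a * b) = θ a * θ b) := by
  constructor
  · intro hθ
    exact ⟨fun a b h => theta_ordered hθ h, fun a b hab => theta_mul hθ hab⟩
  · rintro ⟨hord, hmul⟩ a b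
    have hE : (a⁻¹ * a) * (a⁻¹ * a) = a⁻¹ * a := inv_mul_idem a
    have hF : (b * b⁻¹) * (b * b⁻¹) = b * b⁻¹ := mul_inv_idem b
    have hcomm : (a⁻¹ * a) * (b * b⁻¹) = (b * b⁻¹) * (a⁻¹ * a) := idem_comm hE hF
    have key1 : (a * (b * b⁻¹))⁻¹ * (a * (b * b⁻¹)) = (a⁻¹ * a) * (b * b⁻¹) := by
      rw [is_mul_inv_rev, idem_inv hF]
      calc (b*b⁻¹)*a⁻¹*(a*(b*b⁻¹)) = (b*b⁻¹)*((a⁻¹*a)*(b*b⁻¹)) := by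
            simp only [mul_assoc]
        _ = (b*b⁻¹)*((b*b⁻¹)*(a⁻¹*a)) := by rw [hcomm]
        _ = ((b*b⁻¹)*(b*b⁻¹))*(a⁻¹*a) := (mul_assoc _ _ _).symm
        _ = (b*b⁻¹)*(a⁻¹*a) := by rw [hF]
        _ = (a⁻¹*a)*(b*b⁻¹) := hcomm.symm
    have key2 : ((a⁻¹ * a) * b) * ((a⁻¹ * a) * b)⁻¹ = (a⁻¹ * a) * (b * b⁻¹) := by
      rw [is_mul_inv_rev, idem_inv hE]
      calc ((a⁻¹*a)*b)*(b⁻¹*(a⁻¹*a)) = (a⁻¹*a)*((b*b⁻¹)*(a⁻¹*a)) := by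
            simp only [mul_assoc]
        _ = (a⁻¹*a)*((a⁻¹*a)*(b*b⁻¹)) := by rw [← hcomm]
        _ = ((a⁻¹*a)*(a⁻¹*a))*(b*b⁻¹) := (mul_assoc _ _ _).symm
        _ = (a⁻¹*a)*(b*b⁻¹) := by rw [hE]
    have key3 : (a * (b * b⁻¹)) * ((a⁻¹ * a) * b) = a * b := by
      calc (a*(b*b⁻¹))*((a⁻¹*a)*b) = a*((b*b⁻¹)*(a⁻¹*a))*b := by
            simp only [mul_assoc]
        _ = a*((a⁻¹*a)*(b*b⁻¹))*b := by rw [← hcomm]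
        _ = (a*a⁻¹*a)*(b*b⁻¹*b) := by simp only [mul_assoc]
        _ = a*b := by rw [mi, mi]
    have h := hmul (a * (b * b⁻¹)) ((a⁻¹ * a) * b) (key1.trans key2.symm)
    rw [key3] at h
    rw [h]
    have ord1 : npo (a * (b * b⁻¹)) a := npo_of_right hF rfl
    have ord2 : npo ((a⁻¹ * a) * b) b := ⟨a⁻¹ * a, hE, rfl⟩
    exact npo_trans (npo_mul_right (hord _ _ ord1) _) (npo_mul_left (hord _ _ ord2) _)
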